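/- Expansion inequality: let n, m ≥ 0, A ⊆ Act, and a_i, b_j ∈ Act for each i < n and j < m. Then □_{i<n} a_i.p_i ∥_A □_{j<m} b_j.q_j ⊑_RS ((□Ω₁) □ (□Ω₂)) □ (□Ω₃), where □Ω₁ is the general external choice of all a_i.(p_i ∥_A □_{j<m} b_j.q_j) with i < n and a_i ∉ A, □Ω₂ is the general external choice of all b_j.((□_{i<n} a_i.p_i) ∥_A q_j) with j < m and b_j ∉ A, and □Ω₃ is the general external choice of all a_i.(p_i ∥_A q_j) with i < n, j < m and a_i = b_j ∈ A. -/

import Mathlib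

open Classical

/-- Visible actions plus the invisible action τ. -/
inductive ActT (Act : Type) : Type where
  | act : Act → ActT Act
  | tau : ActT Act

/-- Processes of the recursion-free calculus CLL. -/
inductive Proc (Act : Type) : Type where
  | nil  : Proc Act                                -- 0
  | bot  : Proc Act                                -- ⊥
  | pre  : ActT Act → Proc Act → Proc Act          -- α.t
  | ec   : Proc Act → Proc Act → Proc Act          -- t □ t
  | conj : Proc Act → Proc Act → Proc Act          -- t ∧ t
  | disj : Proc Act → Proc Act → Proc Act          -- t ∨ t
  | par  : Set Act → Proc Act → Proc Act → Proc Act -- t ∥_A t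

namespace Proc

variable {Act : Type}

/-- Whether a process has a τ-transition (structural stratification used for
the negative premises of the SOS rules). -/
def hasTau : Proc Act → Prop
  | nil => False
  | bot => False
  | pre a _ => a = ActT.tau
  | ec t₁ t₂ => hasTau t₁ ∨ hasTau t₂
  | conj t₁ t₂ => hasTau t₁ ∨ hasTau t₂
  | disj _ _ => True
  | par _ t₁ t₂ => hasTau t₁ ∨ hasTau t₂

/-- The transition relation, given by the SOS rules of CLL_R. -/
inductive Trans : Proc Act → ActT Act → Proc Act → Prop where
  | pre : Trans (pre α t) α t
  | ecL : Trans t₁ (ActT.act a) t₁' → ¬ hasTau t₂ →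
      Trans (ec t₁ t₂) (ActT.act a) t₁'
  | ecR : ¬ hasTau t₁ → Trans t₂ (ActT.act a) t₂' →
      Trans (ec t₁ t₂) (ActT.act a) t₂'
  | ecTauL : Trans t₁ ActT.tau t₁' → Trans (ec t₁ t₂) ActT.tau (ec t₁' t₂)
  | ecTauR : Trans t₂ ActT.tau t₂' → Trans (ec t₁ t₂) ActT.tau (ec t₁ t₂')
  | conjAct : Trans t₁ (ActT.act a) t₁' → Trans t₂ (ActT.act a) t₂' →
      Trans (conj t₁ t₂) (ActT.act a) (conj t₁' t₂')
  | conjTauL : Trans t₁ ActT.tau t₁' → Trans (conj t₁ t₂) ActT.tau (conj t₁' t₂)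
  | conjTauR : Trans t₂ ActT.tau t₂' → Trans (conj t₁ t₂) ActT.tau (conj t₁ t₂')
  | disjL : Trans (disj t₁ t₂) ActT.tau t₁
  | disjR : Trans (disj t₁ t₂) ActT.tau t₂
  | parTauL : Trans t₁ ActT.tau t₁' → Trans (par A t₁ t₂) ActT.tau (par A t₁' t₂)
  | parTauR : Trans t₂ ActT.tau t₂' → Trans (par A t₁ t₂) ActT.tau (par A t₁ t₂')
  | parL : a ∉ A → Trans t₁ (ActT.act a) t₁' → ¬ hasTau t₂ →
      Trans (par A t₁ t₂) (ActT.act a) (par A t₁' t₂)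
  | parR : a ∉ A → ¬ hasTau t₁ → Trans t₂ (ActT.act a) t₂' →
      Trans (par A t₁ t₂) (ActT.act a) (par A t₁ t₂')
  | parSync : a ∈ A → Trans t₁ (ActT.act a) t₁' → Trans t₂ (ActT.act a) t₂' →
      Trans (par A t₁ t₂) (ActT.act a) (par A t₁' t₂')

/-- The ready set I(p). -/
def ready (p : Proc Act) : Set (ActT Act) := {α | ∃ q, Trans p α q}

/-- p is stable if it has no τ-transition. -/
def Stable (p : Proc Act) : Prop := ∀ q, ¬ Trans p ActT.tau q

/-- The inconsistency predicate F, as the least predicate closed under the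
predicative rules of CLL_R. -/
inductive Fp : Proc Act → Prop where
  | bot : Fp bot
  | pre : Fp t → Fp (pre α t)
  | disj : Fp t₁ → Fp t₂ → Fp (disj t₁ t₂)
  | ecL : Fp t₁ → Fp (ec t₁ t₂)
  | ecR : Fp t₂ → Fp (ec t₁ t₂)
  | parL : Fp t₁ → Fp (par A t₁ t₂)
  | parR : Fp t₂ → Fp (par A t₁ t₂)
  | conjL : Fp t₁ → Fp (conj t₁ t₂)
  | conjR : Fp t₂ → Fp (conj t₁ t₂)
  | conjReady : Stable (conj t₁ t₂) → ready t₁ ≠ ready t₂ → Fp (conj t₁ t₂)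
  | conjSucc : Trans (conj t₁ t₂) α s → (∀ y, Trans (conj t₁ t₂) α y → Fp y) →
      Fp (conj t₁ t₂)
  | conjStable :
      (∀ y, Relation.ReflTransGen (fun x z => Trans x ActT.tau z) (conj t₁ t₂) y →
        Stable y → Fp y) →
      Fp (conj t₁ t₂)

/-- One τ-step with both endpoints consistent. -/
def tauStepF (p q : Proc Act) : Prop := Trans p ActT.tau q ∧ ¬ Fp p ∧ ¬ Fp q

/-- p ⇒_F| q : a sequence of τ-transitions from p to q, all states outside F,
with q stable. -/
def epsF (p q : Proc Act) : Prop :=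
  Relation.ReflTransGen tauStepF p q ∧ ¬ Fp p ∧ ¬ Fp q ∧ Stable q

/-- p =a⇒_F| q. -/
def wkF (a : Act) (p q : Proc Act) : Prop :=
  ∃ r s, Relation.ReflTransGen tauStepF p r ∧ ¬ Fp p ∧ ¬ Fp r ∧
    Trans r (ActT.act a) s ∧ ¬ Fp s ∧
    Relation.ReflTransGen tauStepF s q ∧ ¬ Fp q ∧ Stable q

/-- R is a stable ready simulation. -/
def StableRS (R : Proc Act → Proc Act → Prop) : Prop :=
  ∀ p q, R p q →
    Stable p ∧ Stable q ∧
    (¬ Fp p → ¬ Fp q) ∧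
    (∀ a p', wkF a p p' → ∃ q', wkF a q q' ∧ R p' q') ∧
    (¬ Fp p → ready p = ready q)

/-- p ⊏̃_RS q. -/
def rsLT (p q : Proc Act) : Prop := ∃ R, StableRS R ∧ R p q

/-- p ⊑_RS q. -/
def rsLE (p q : Proc Act) : Prop :=
  ∀ p', epsF p p' → ∃ q', epsF q q' ∧ rsLT p' q'

/-- p =_RS q. -/
def rsEq (p q : Proc Act) : Prop := rsLE p q ∧ rsLE q p

/-- Basic process terms T(Σ_B): no ⊥ and no ∧. -/
inductive Basic : Proc Act → Prop where
  | nil : Basic nil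
  | pre : Basic t → Basic (pre α t)
  | disj : Basic t₁ → Basic t₂ → Basic (disj t₁ t₂)
  | ec : Basic t₁ → Basic t₂ → Basic (ec t₁ t₂)
  | par : Basic t₁ → Basic t₂ → Basic (par A t₁ t₂)

/-- General external choice □ over a finite sequence (left-nested). -/
def ecList : List (Proc Act) → Proc Act
  | [] => nil
  | t :: ts => ts.foldl ec t

/-- General disjunction ⋁ over a nonempty finite sequence (left-nested). -/
def djList : List (Proc Act) → Proc Act
  | [] => bot
  | t :: ts => ts.foldl disj t

/-- □_{i<n} a_i.t_i for a sequence of prefixed terms. -/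
def ecPre (l : List (Act × Proc Act)) : Proc Act :=
  ecList (l.map fun x => pre (ActT.act x.1) x.2)

/-- The expansion term E = ((□Ω₁) □ (□Ω₂)) □ (□Ω₃). -/
noncomputable def expTerm (A : Set Act) (l₁ l₂ : List (Act × Proc Act)) : Proc Act :=
  ec (ec
      (ecList ((l₁.filter fun x => decide (x.1 ∉ A)).map
        fun x => pre (ActT.act x.1) (par A x.2 (ecPre l₂))))
      (ecList ((l₂.filter fun x => decide (x.1 ∉ A)).map
        fun x => pre (ActT.act x.1) (par A (ecPre l₁) x.2))))
    (ecList (l₁.flatMap fun x =>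
      (l₂.filter fun y => decide (y.1 = x.1 ∧ x.1 ∈ A)).map
        fun y => pre (ActT.act x.1) (par A x.2 y.2)))

/-- Normal forms NF_B. -/
inductive NFB : Proc Act → Prop where
  | mk (ls : List (List (Act × Proc Act))) (hne : ls ≠ [])
      (hnodup : ∀ l ∈ ls, (l.map Prod.fst).Nodup)
      (hsub : ∀ l ∈ ls, ∀ x ∈ l, NFB x.2) :
      NFB (djList (ls.map ecPre))

/-- NF = NF_B ∪ {⊥}. -/
def NF (p : Proc Act) : Prop := NFB p ∨ p = bot

/-- Derivability ⊢ t ≤ t' in the proof system AX_CLL. -/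
inductive Deriv : Proc Act → Proc Act → Prop where
  | refl (t) : Deriv t t
  | trans : Deriv t t' → Deriv t' t'' → Deriv t t''
  | mono_pre : Deriv t t' → Deriv (pre α t) (pre α t')
  | mono_ec : Deriv s s' → Deriv t t' → Deriv (ec s t) (ec s' t')
  | mono_conj : Deriv s s' → Deriv t t' → Deriv (conj s t) (conj s' t')
  | mono_disj : Deriv s s' → Deriv t t' → Deriv (disj s t) (disj s' t')
  | mono_par : Deriv s s' → Deriv t t' → Deriv (par A s t) (par A s' t')
  -- external choice
  | ec_comm : Deriv (ec x y) (ec y x)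
  | ec_assoc₁ : Deriv (ec (ec x y) z) (ec x (ec y z))
  | ec_assoc₂ : Deriv (ec x (ec y z)) (ec (ec x y) z)
  | ec_idem₁ : Deriv (ec x x) x
  | ec_idem₂ : Deriv x (ec x x)
  | ec_nil₁ : Deriv (ec x nil) x
  | ec_nil₂ : Deriv x (ec x nil)
  | ec_bot₁ : Deriv (ec x bot) bot
  | ec_bot₂ : Deriv bot (ec x bot)
  -- disjunction
  | disj_comm : Deriv (disj x y) (disj y x)
  | disj_assoc₁ : Deriv (disj x (disj y z)) (disj (disj x y) z)
  | disj_assoc₂ : Deriv (disj (disj x y) z) (disj x (disj y z))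
  | disj_idem₁ : Deriv (disj x x) x
  | disj_idem₂ : Deriv x (disj x x)
  | disj_bot₁ : Deriv (disj x bot) x
  | disj_bot₂ : Deriv x (disj x bot)
  | disj_le : Deriv x (disj x y)
  -- conjunction
  | conj_comm : Deriv (conj x y) (conj y x)
  | conj_idem₁ : Deriv (conj x x) x
  | conj_idem₂ : Deriv x (conj x x)
  | conj_bot₁ : Deriv (conj x bot) bot
  | conj_bot₂ : Deriv bot (conj x bot)
  -- prefixing
  | pre_bot₁ : Deriv (pre (ActT.act a) bot) bot
  | pre_bot₂ : Deriv bot (pre (ActT.act a) bot)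
  | tau_pre₁ : Deriv (pre ActT.tau x) x
  | tau_pre₂ : Deriv x (pre ActT.tau x)
  -- parallel
  | par_comm : Deriv (par A x y) (par A y x)
  | par_bot₁ : Deriv (par A x bot) bot
  | par_bot₂ : Deriv bot (par A x bot)
  -- distribution over disjunction
  | ds_ec : Deriv (ec x (disj y z)) (disj (ec x y) (ec x z))
  | ds_conj : Deriv (conj x (disj y z)) (disj (conj x y) (conj x z))
  | ds_par : Deriv (par A x (disj y z)) (disj (par A x y) (par A x z))
  | ds_pre : Basic x → Basic y →
      Deriv (pre (ActT.act a) (disj x y)) (ec (pre (ActT.act a) x) (pre (ActT.act a) y))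
  -- external choice and conjunction
  | ecc1₁ (l₁ l₂ : List (Act × Proc Act)) :
      {a | a ∈ l₁.map Prod.fst} ≠ {a | a ∈ l₂.map Prod.fst} →
      Deriv (conj (ecPre l₁) (ecPre l₂)) bot
  | ecc1₂ (l₁ l₂ : List (Act × Proc Act)) :
      {a | a ∈ l₁.map Prod.fst} ≠ {a | a ∈ l₂.map Prod.fst} →
      Deriv bot (conj (ecPre l₁) (ecPre l₂))
  | ecc2 (l : List (Act × Proc Act × Proc Act)) :
      Deriv (ecPre (l.map fun x => (x.1, conj x.2.1 x.2.2)))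
            (conj (ecPre (l.map fun x => (x.1, x.2.1)))
                  (ecPre (l.map fun x => (x.1, x.2.2))))
  | ecc3 (l : List (Act × Proc Act × Proc Act)) :
      (l.map Prod.fst).Nodup →
      Deriv (conj (ecPre (l.map fun x => (x.1, x.2.1)))
                  (ecPre (l.map fun x => (x.1, x.2.2))))
            (ecPre (l.map fun x => (x.1, conj x.2.1 x.2.2)))
  -- expansion
  | exp1 (A : Set Act) (l₁ l₂ : List (Act × Proc Act)) :
      Deriv (par A (ecPre l₁) (ecPre l₂)) (expTerm A l₁ l₂)
  | exp2 (A : Set Act) (l₁ l₂ : List (Act × Proc Act)) :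
      (∀ x ∈ l₁, Basic x.2) → (∀ x ∈ l₂, Basic x.2) →
      Deriv (expTerm A l₁ l₂) (par A (ecPre l₁) (ecPre l₂))

end Proc

/-!
Both sides are stable: prefix sums have no τ-transitions, and neither do external choices or
parallel compositions of them. Each summand of the expansion term is one of the three SOS rules
of `∥_A` (left move, right move, synchronisation) applied to the two prefix sums, so both sides
have exactly the same transitions, with the same targets. Inconsistency only propagates through
`□`, `∥_A` and prefixes, so if the expansion term is inconsistent then some `p_i` or `q_j` is, and
with it the parallel composition. Hence the identity on stable processes together with this one
pair is a stable ready simulation.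
-/

namespace Proc

section

variable {Act : Type}

theorem hasTau_of_trans_tau {t q : Proc Act} (h : Trans t ActT.tau q) : hasTau t := by
  generalize hα : ActT.tau = α at h
  induction h <;> simp_all [hasTau]

theorem stable_of_not_hasTau {t : Proc Act} (h : ¬ hasTau t) : Stable t :=
  fun _ ht => h (hasTau_of_trans_tau ht)

theorem Stable.eq_of_reflTransGen_tauStepF {p q : Proc Act} (hp : Stable p)
    (h : Relation.ReflTransGen tauStepF p q) : q = p := by
  rcases h.cases_head with h | ⟨r, hpr, -⟩
  · exact h.symm
  · exact absurd hpr.1 (hp r)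

theorem stable_of_wkF {a : Act} {p q : Proc Act} (h : wkF a p q) : Stable q :=
  let ⟨_, _, _, _, _, _, _, _, _, hq⟩ := h
  hq

theorem rsLE_of_rsLT {p q : Proc Act} (hp : Stable p) (h : rsLT p q) : rsLE p q := by
  rintro p' ⟨hpp', hFp, -, -⟩
  have := hp.eq_of_reflTransGen_tauStepF hpp'
  subst p'
  obtain ⟨R, hR, hpq⟩ := h
  obtain ⟨-, hq, hFq, -⟩ := hR p q hpq
  exact ⟨q, ⟨.refl, hFq hFp, hFq hFp, hq⟩, R, hR, hpq⟩

theorem rsLT_of_trans_iff {p q : Proc Act} (hp : Stable p) (hq : Stable q)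
    (hF : Fp q → Fp p) (htr : ∀ α s, Trans p α s ↔ Trans q α s) : rsLT p q := by
  -- after the first visible step `p` and `q` are in the same state
  refine ⟨fun x y => (x = y ∧ Stable x) ∨ (x = p ∧ y = q), ?_, .inr ⟨rfl, rfl⟩⟩
  rintro x y (⟨rfl, hx⟩ | ⟨rfl, rfl⟩)
  · exact ⟨hx, hx, id, fun _ x' hw => ⟨x', hw, .inl ⟨rfl, stable_of_wkF hw⟩⟩, fun _ => rfl⟩
  · refine ⟨hp, hq, mt hF, ?_, fun _ => Set.ext fun α => exists_congr fun s => htr α s⟩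
    rintro a x' ⟨r, s, hpr, hFp, -, hrs, hFs, hsx', hFx', hx'⟩
    have := hp.eq_of_reflTransGen_tauStepF hpr
    subst r
    exact ⟨x', ⟨_, s, .refl, mt hF hFp, mt hF hFp, (htr _ _).1 hrs, hFs, hsx', hFx', hx'⟩,
      .inl ⟨rfl, hx'⟩⟩

/-- `P` is an invariant of the summands under which `Q` distributes over `□`. -/
theorem foldl_ec_iff (P Q : Proc Act → Prop) (hP : ∀ x y, P x → P y → P (ec x y))
    (hQ : ∀ x y, P x → P y → (Q (ec x y) ↔ Q x ∨ Q y)) :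
    ∀ (ts : List (Proc Act)) (t : Proc Act), P t → (∀ u ∈ ts, P u) →
      (Q (ts.foldl ec t) ↔ ∃ u ∈ t :: ts, Q u)
  | [], t, _, _ => by simp
  | u :: ts, t, ht, hts => by
    rw [List.foldl_cons, foldl_ec_iff P Q hP hQ ts (ec t u)
      (hP t u ht (hts u List.mem_cons_self)) fun v hv => hts v (List.mem_cons_of_mem u hv)]
    simp only [List.mem_cons, exists_eq_or_imp, hQ t u ht (hts u List.mem_cons_self), or_assoc]

theorem ecList_iff (P Q : Proc Act → Prop) (hP : ∀ x y, P x → P y → P (ec x y))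
    (hQ : ∀ x y, P x → P y → (Q (ec x y) ↔ Q x ∨ Q y)) (hnil : ¬ Q nil)
    (l : List (Proc Act)) (hl : ∀ t ∈ l, P t) : Q (ecList l) ↔ ∃ t ∈ l, Q t := by
  cases l with
  | nil => simpa [ecList] using hnil
  | cons t ts =>
    exact foldl_ec_iff P Q hP hQ ts t (hl t List.mem_cons_self)
      fun u hu => hl u (List.mem_cons_of_mem t hu)

theorem hasTau_ecList_iff (l : List (Proc Act)) : hasTau (ecList l) ↔ ∃ t ∈ l, hasTau t :=
  ecList_iff (fun _ => True) hasTau (by simp) (fun _ _ _ _ => Iff.rfl) id l (by simp)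

theorem Fp_ec_iff {t₁ t₂ : Proc Act} : Fp (ec t₁ t₂) ↔ Fp t₁ ∨ Fp t₂ :=
  ⟨fun h => by cases h <;> simp_all, fun h => h.elim .ecL .ecR⟩

theorem Fp_ecList_iff (l : List (Proc Act)) : Fp (ecList l) ↔ ∃ t ∈ l, Fp t :=
  ecList_iff (fun _ => True) Fp (by simp) (fun _ _ _ _ => Fp_ec_iff) (fun h => by cases h) l
    (by simp)

theorem trans_ec_iff {t₁ t₂ : Proc Act} (h₁ : ¬ hasTau t₁) (h₂ : ¬ hasTau t₂)
    {α : ActT Act} {s : Proc Act} : Trans (ec t₁ t₂) α s ↔ Trans t₁ α s ∨ Trans t₂ α s := by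
  constructor
  · intro h
    cases h with
    | ecL h _ => exact .inl h
    | ecR _ h => exact .inr h
    | ecTauL h => exact (h₁ (hasTau_of_trans_tau h)).elim
    | ecTauR h => exact (h₂ (hasTau_of_trans_tau h)).elim
  · cases α with
    | act a => exact fun h => h.elim (Trans.ecL · h₂) (Trans.ecR h₁)
    | tau =>
      exact fun h => (h.elim (h₁ <| hasTau_of_trans_tau ·) (h₂ <| hasTau_of_trans_tau ·)).elim

theorem trans_ecList_iff {l : List (Proc Act)} (hl : ¬ hasTau (ecList l)) {α : ActT Act}
    {s : Proc Act} : Trans (ecList l) α s ↔ ∃ t ∈ l, Trans t α s :=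
  ecList_iff (¬ hasTau ·) (Trans · α s) (fun _ _ hx hy => by simp [hasTau, hx, hy])
    (fun _ _ h₁ h₂ => trans_ec_iff h₁ h₂) (fun h => by cases h) l
    fun t ht htau => hl ((hasTau_ecList_iff l).2 ⟨t, ht, htau⟩)

theorem trans_pre_iff {α β : ActT Act} {t s : Proc Act} :
    Trans (pre β t) α s ↔ α = β ∧ s = t :=
  ⟨fun h => by cases h; exact ⟨rfl, rfl⟩, fun ⟨hα, hs⟩ => hα ▸ hs ▸ .pre⟩

theorem Fp_pre_iff {α : ActT Act} {t : Proc Act} : Fp (pre α t) ↔ Fp t :=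
  ⟨fun h => by cases h; assumption, .pre⟩

theorem Fp_par_iff {A : Set Act} {t₁ t₂ : Proc Act} : Fp (par A t₁ t₂) ↔ Fp t₁ ∨ Fp t₂ :=
  ⟨fun h => by cases h <;> simp_all, fun h => h.elim .parL .parR⟩

theorem trans_par_iff {A : Set Act} {t₁ t₂ : Proc Act} (h₁ : ¬ hasTau t₁) (h₂ : ¬ hasTau t₂)
    {α : ActT Act} {s : Proc Act} :
    Trans (par A t₁ t₂) α s ↔ ∃ a, α = ActT.act a ∧
      ((a ∉ A ∧ ∃ t₁', Trans t₁ (ActT.act a) t₁' ∧ s = par A t₁' t₂) ∨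
       (a ∉ A ∧ ∃ t₂', Trans t₂ (ActT.act a) t₂' ∧ s = par A t₁ t₂') ∨
       (a ∈ A ∧ ∃ t₁' t₂', Trans t₁ (ActT.act a) t₁' ∧ Trans t₂ (ActT.act a) t₂' ∧
          s = par A t₁' t₂')) := by
  constructor
  · intro h
    cases h with
    | parTauL h => exact (h₁ (hasTau_of_trans_tau h)).elim
    | parTauR h => exact (h₂ (hasTau_of_trans_tau h)).elim
    | parL ha h _ => exact ⟨_, rfl, .inl ⟨ha, _, h, rfl⟩⟩
    | parR ha _ h => exact ⟨_, rfl, .inr <| .inl ⟨ha, _, h, rfl⟩⟩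
    | parSync ha h h' => exact ⟨_, rfl, .inr <| .inr ⟨ha, _, _, h, h', rfl⟩⟩
  · rintro ⟨a, rfl, ⟨ha, _, h, rfl⟩ | ⟨ha, _, h, rfl⟩ | ⟨ha, _, _, h, h', rfl⟩⟩
    exacts [.parL ha h h₂, .parR ha h₁ h, .parSync ha h h']

theorem not_hasTau_ecPre (l : List (Act × Proc Act)) : ¬ hasTau (ecPre l) := by
  simp [ecPre, hasTau_ecList_iff, hasTau]

theorem trans_ecPre_iff {l : List (Act × Proc Act)} {α : ActT Act} {s : Proc Act} :
    Trans (ecPre l) α s ↔ ∃ x ∈ l, α = ActT.act x.1 ∧ s = x.2 := by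
  rw [ecPre, trans_ecList_iff (not_hasTau_ecPre l)]
  simp [trans_pre_iff]

theorem Fp_ecPre_iff {l : List (Act × Proc Act)} : Fp (ecPre l) ↔ ∃ x ∈ l, Fp x.2 := by
  simp [ecPre, Fp_ecList_iff, Fp_pre_iff]

section Expansion

variable (A : Set Act) (l₁ l₂ : List (Act × Proc Act))

theorem trans_expTerm_iff {α : ActT Act} {s : Proc Act} :
    Trans (expTerm A l₁ l₂) α s ↔ Trans (par A (ecPre l₁) (ecPre l₂)) α s := by
  rw [expTerm, trans_ec_iff ?_ ?_, trans_ec_iff ?_ ?_, trans_ecList_iff ?_, trans_ecList_iff ?_,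
    trans_ecList_iff ?_, trans_par_iff (not_hasTau_ecPre l₁) (not_hasTau_ecPre l₂)]
  · aesop (add simp [trans_pre_iff, trans_ecPre_iff])
  all_goals simp [hasTau, hasTau_ecList_iff]

theorem Fp_par_of_Fp_expTerm (h : Fp (expTerm A l₁ l₂)) : Fp (par A (ecPre l₁) (ecPre l₂)) := by
  have hl₁ {x} (hx : x ∈ l₁) (h : Fp x.2) : Fp (ecPre l₁) := Fp_ecPre_iff.2 ⟨x, hx, h⟩
  have hl₂ {y} (hy : y ∈ l₂) (h : Fp y.2) : Fp (ecPre l₂) := Fp_ecPre_iff.2 ⟨y, hy, h⟩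
  simp only [expTerm, Fp_ec_iff, Fp_ecList_iff, List.mem_map, List.mem_flatMap,
    List.mem_filter] at h
  rcases h with (⟨_, ⟨x, ⟨hx, -⟩, rfl⟩, h⟩ | ⟨_, ⟨y, ⟨hy, -⟩, rfl⟩, h⟩) |
    ⟨_, ⟨x, hx, y, ⟨hy, -⟩, rfl⟩, h⟩ <;> rw [Fp_pre_iff, Fp_par_iff] at h <;> rw [Fp_par_iff]
  · exact h.imp_left (hl₁ hx)
  · exact h.imp_right (hl₂ hy)
  · exact h.imp (hl₁ hx) (hl₂ hy)

end Expansion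

end

/-- Expansion inequality. -/
theorem stmt12 {Act : Type} (A : Set Act) (l₁ l₂ : List (Act × Proc Act)) :
    rsLE (par A (ecPre l₁) (ecPre l₂)) (expTerm A l₁ l₂) := by
  have hpar : Stable (par A (ecPre l₁) (ecPre l₂)) :=
    stable_of_not_hasTau (by simp [hasTau, not_hasTau_ecPre])
  have hexp : Stable (expTerm A l₁ l₂) :=
    stable_of_not_hasTau (by simp [expTerm, hasTau, hasTau_ecList_iff])
  refine rsLE_of_rsLT hpar (rsLT_of_trans_iff hpar hexp (Fp_par_of_Fp_expTerm A l₁ l₂) ?_)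
  exact fun _ _ => (trans_expTerm_iff A l₁ l₂).symm

end Proc
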